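/- Define p_k(t) = (1/(2^k k!)) d^{k-2}/dt^{k-2} (t^2 - 1)^k for k ≥ 2. Then p_k(0) = 0 if k is odd with k ≥ 3, p_2(0) = 1/8, and p_{2n}(0) = (-1)^{n-1} (2n-3)!!/(2n+2)!! for n ≥ 2. -/
import Mathlib

open Polynomial Finset

lemma iteratedDeriv_polyeval (n : ℕ) (p : Polynomial ℝ) :
    iteratedDeriv n (fun x => p.eval x) = fun x => (Polynomial.derivative^[n] p).eval x := by
  induction n generalizing p with
  | zero => simp
  | succ n ih =>
    rw [iteratedDeriv_succ']
    have h : deriv (fun x => p.eval x) = fun x => p.derivative.eval x :=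
      funext fun x => Polynomial.deriv p
    rw [h, ih, Function.iterate_succ_apply]

lemma coeff_sq_sub_one_pow (k m : ℕ) :
    (((X : ℝ[X]) ^ 2 - 1) ^ k).coeff m =
      ∑ i ∈ Finset.range (k + 1),
        (if 2 * i = m then ((-1) ^ (i + k) * (k.choose i) : ℝ) else 0) := by
  rw [sub_pow, finset_sum_coeff]
  refine Finset.sum_congr rfl fun i _ => ?_
  have h : (-1 : ℝ[X]) ^ (i + k) * ((X : ℝ[X]) ^ 2) ^ i * 1 ^ (k - i) * (k.choose i : ℝ[X])
      = C ((-1) ^ (i + k) * (k.choose i) : ℝ) * X ^ (2 * i) := by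
    simp [← pow_mul, C_mul]
    ring
  rw [h, coeff_C_mul, coeff_X_pow]
  by_cases hm : m = 2 * i
  · simp [hm]
  · rw [if_neg (fun he : 2 * i = m => hm he.symm)]; simp [hm]

/-- `p_k(t) = (1/(2^k k!)) d^{k-2}/dt^{k-2} (t²-1)^k`. -/
noncomputable def legendrep (k : ℕ) : ℝ → ℝ :=
  fun t => (1 / (2 ^ k * (Nat.factorial k : ℝ))) *
    iteratedDeriv (k - 2) (fun s : ℝ => (s ^ 2 - 1) ^ k) t

lemma legendrep_zero_eq (k : ℕ) :
    legendrep k 0 = (1 / (2 ^ k * (k.factorial : ℝ))) * ((k - 2).factorial : ℝ) *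
      (((X : ℝ[X]) ^ 2 - 1) ^ k).coeff (k - 2) := by
  unfold legendrep
  have hf : (fun s : ℝ => (s ^ 2 - 1) ^ k) = fun s => (((X : ℝ[X]) ^ 2 - 1) ^ k).eval s := by
    funext s; simp
  rw [hf, iteratedDeriv_polyeval]
  show _ * Polynomial.eval 0 _ = _
  rw [← coeff_zero_eq_eval_zero, coeff_iterate_derivative]
  simp [Nat.descFactorial_self, nsmul_eq_mul]
  ring

theorem legendrep_at_zero :
    (∀ k : ℕ, Odd k → 3 ≤ k → legendrep k 0 = 0) ∧
    legendrep 2 0 = 1 / 8 ∧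
    (∀ n : ℕ, 2 ≤ n →
      legendrep (2 * n) 0 =
        (-1 : ℝ) ^ (n - 1) * (Nat.doubleFactorial (2 * n - 3) : ℝ) /
          (Nat.doubleFactorial (2 * n + 2) : ℝ)) := by
  refine ⟨?_, ?_, ?_⟩
  · intro k hk h3
    rw [legendrep_zero_eq, coeff_sq_sub_one_pow, Finset.sum_eq_zero, mul_zero]
    intro i _
    rw [if_neg]
    obtain ⟨c, hc⟩ := hk
    omega
  · unfold legendrep
    norm_num [iteratedDeriv_zero]
  · intro n hn
    obtain ⟨m, rfl⟩ : ∃ m, n = m + 2 := ⟨n - 2, by omega⟩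
    rw [legendrep_zero_eq, coeff_sq_sub_one_pow]
    rw [Finset.sum_eq_single (m + 1)]
    · rw [if_pos (by omega)]
      rw [show 2 * (m + 2) - 3 = 2 * m + 1 from by omega,
        show m + 2 - 1 = m + 1 from by omega,
        show 2 * (m + 2) - 2 = 2 * m + 2 from by omega,
        show (-1 : ℝ) ^ (m + 1 + 2 * (m + 2)) = (-1) ^ (m + 1) from by
          rw [pow_add]; simp [pow_mul]]
      have hC : ((2 * (m + 2)).choose (m + 1)) * (m + 1).factorial * (m + 3).factorial
          = (2 * (m + 2)).factorial := by
        have := Nat.choose_mul_factorial_mul_factorial (show m + 1 ≤ 2 * (m + 2) by omega)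
        rwa [show 2 * (m + 2) - (m + 1) = m + 3 from by omega] at this
      have e1 : ((2 * m + 2).factorial : ℝ)
          = (2 * m + 2) * (Nat.doubleFactorial (2 * m + 1) : ℝ) * (2 ^ m * m.factorial) := by
        have h1 : (2 * m + 1).factorial = Nat.doubleFactorial (2 * m + 1) * Nat.doubleFactorial (2 * m) :=
          Nat.factorial_eq_mul_doubleFactorial (2 * m)
        have h2 : Nat.doubleFactorial (2 * m) = 2 ^ m * m.factorial := Nat.doubleFactorial_two_mul m
        have h3 : (2 * m + 2).factorial = (2 * m + 2) * (2 * m + 1).factorial := by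
          rw [show 2 * m + 2 = (2 * m + 1) + 1 from by omega, Nat.factorial_succ]
        rw [h3, h1, h2]
        push_cast
        ring
      have e2 : ((2 * (m + 2)).factorial : ℝ)
          = ((2 * (m + 2)).choose (m + 1) : ℝ) * ((m + 1) * m.factorial)
            * (m + 3).factorial := by
        rw [← hC, Nat.factorial_succ]
        push_cast
        ring
      have e3 : ((Nat.doubleFactorial (2 * (m + 2) + 2) : ℕ) : ℝ) = 2 ^ (m + 3) * ((m + 3).factorial : ℝ) := by
        rw [show 2 * (m + 2) + 2 = 2 * (m + 3) from by omega, Nat.doubleFactorial_two_mul]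
        push_cast
        ring
      rw [e1, e2, e3]
      have n1 : ((2 * (m + 2)).choose (m + 1) : ℝ) ≠ 0 := by
        exact_mod_cast Nat.choose_pos (show m + 1 ≤ 2 * (m + 2) by omega) |>.ne'
      have n2 : (m.factorial : ℝ) ≠ 0 := by exact_mod_cast m.factorial_ne_zero
      have n3 : ((m + 3).factorial : ℝ) ≠ 0 := by exact_mod_cast (m + 3).factorial_ne_zero
      have n4 : (Nat.doubleFactorial (2 * m + 1) : ℝ) ≠ 0 := by
        exact_mod_cast (Nat.doubleFactorial_pos (2 * m + 1)).ne'
      field_simp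
      ring
    · intro b _ hb
      rw [if_neg (by omega)]
    · intro h
      exact absurd (Finset.mem_range.mpr (by omega)) h
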